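/- arXiv:2410.12309 — 10 statements merged into one kernel-verified Lean document; each statement's English description precedes it below -/
import Mathlib

section
/- (Lemma 1) Under the context-aware randomized response mechanism, the output marginal distribution equals the input distribution: for every y ∈ 𝒳, P_Y(y) = ∑_x P_X(x)·Q(y|x) = P_X(y). -/
/-- Lemma 1: the output marginal of the context-aware RR mechanism equals
the input distribution: for every y, P_Y(y) = ∑_x P_X(x)·Q(y|x) = P_X(y). -/
theorem contextAwareRR_marginal_eq_prior
    {X : Type*} [Fintype X] [Nonempty X] [DecidableEq X]
    (P : X → ℝ) (hpos : ∀ x, 0 < P x) (hsum : ∑ x, P x = 1)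
    (ε : ℝ) (hε : 0 ≤ ε)
    (Q : X → X → ℝ)
    (hQ : ∀ x y, Q x y =
      if y = x then 1 - (1 - P x) * Real.exp (-ε) else P y * Real.exp (-ε)) :
    ∀ y, ∑ x, P x * Q x y = P y := by
  intro y
  have key : ∀ x, P x * Q x y =
      P x * (P y * Real.exp (-ε)) + (if x = y then P y * (1 - Real.exp (-ε)) else 0) := by
    intro x
    rw [hQ]
    by_cases h : x = y
    · subst h; simp; ring
    · simp [h, Ne.symm h]
  rw [Finset.sum_congr rfl (fun x _ => key x)]
  rw [Finset.sum_add_distrib, Finset.sum_ite_eq' Finset.univ y (fun _ => P y * (1 - Real.exp (-ε))),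
    ← Finset.sum_mul, hsum]
  simp
  ring
end

section
/- (Theorem 1, sufficiency) Let P_min = min_x P_X(x). If ε ≥ log(1/P_min − 1) or ε = 0, then the context-aware randomized response mechanism satisfies (ε,0)-LIP, i.e., for all x, y ∈ 𝒳: e^{−ε}·Q(y|x) ≤ P_Y(y) ≤ e^{ε}·Q(y|x). -/
/-- Theorem 1, sufficiency: if ε ≥ log(1/P_min − 1) or ε = 0, then the
context-aware RR mechanism satisfies (ε,0)-LIP. -/
theorem contextAwareRR_pure_LIP_of_large_eps
    {X : Type*} [Fintype X] [DecidableEq X] [Nontrivial X]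
    (P : X → ℝ) (hpos : ∀ x, 0 < P x) (hsum : ∑ x, P x = 1)
    (ε : ℝ) (hε : 0 ≤ ε)
    (Q : X → X → ℝ)
    (hQ : ∀ x y, Q x y =
      if y = x then 1 - (1 - P x) * Real.exp (-ε) else P y * Real.exp (-ε))
    (pmin : ℝ) (hpmin : IsLeast (Set.range P) pmin)
    (hrange : ε ≥ Real.log (1 / pmin - 1) ∨ ε = 0) :
    ∀ x y, Real.exp (-ε) * Q x y ≤ (∑ x', P x' * Q x' y) ∧
      (∑ x', P x' * Q x' y) ≤ Real.exp ε * Q x y := by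
  set t := Real.exp (-ε) with ht
  have ht0 : 0 < t := Real.exp_pos _
  have ht1 : t ≤ 1 := Real.exp_le_one_iff.mpr (by linarith)
  have hE1 : 1 ≤ Real.exp ε := Real.one_le_exp hε
  have hEt : Real.exp ε * t = 1 := by
    rw [ht, ← Real.exp_add]; simp
  -- marginal equals P y
  have hmarg : ∀ y, (∑ x', P x' * Q x' y) = P y := by
    intro y
    have hterm : ∀ x', P x' * Q x' y
        = P x' * P y * t + (if x' = y then P y * (1 - t) else 0) := by
      intro x'
      rw [hQ]
      by_cases h : y = x'
      · subst h; simp; ring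
      · rw [if_neg h, if_neg (fun hh => h hh.symm)]; ring
    rw [Finset.sum_congr rfl (fun x' _ => hterm x'), Finset.sum_add_distrib]
    rw [Finset.sum_ite_eq' Finset.univ y (fun _ => P y * (1 - t))]
    have : ∑ x', P x' * P y * t = (∑ x', P x') * (P y * t) := by
      rw [Finset.sum_mul]; exact Finset.sum_congr rfl (fun x' _ => by ring)
    rw [this, hsum]
    simp; ring
  -- each probability is ≤ 1
  have hle1 : ∀ x, P x ≤ 1 := by
    intro x
    calc P x ≤ ∑ x', P x' :=
          Finset.single_le_sum (fun i _ => (hpos i).le) (Finset.mem_univ x)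
      _ = 1 := hsum
  have hpm_le : ∀ x, pmin ≤ P x := fun x => hpmin.2 ⟨x, rfl⟩
  obtain ⟨x0, hx0⟩ := hpmin.1
  have hpm0 : 0 < pmin := hx0 ▸ hpos x0
  -- pmin < 1 using nontriviality
  have hpm1 : pmin < 1 := by
    obtain ⟨a, b, hab⟩ := exists_pair_ne X
    have hsub : ({a, b} : Finset X) ⊆ Finset.univ := Finset.subset_univ _
    have h2 : P a + P b ≤ ∑ x', P x' := by
      have := Finset.sum_le_sum_of_subset_of_nonneg hsub
        (fun i _ _ => (hpos i).le)
      rwa [Finset.sum_pair hab] at this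
    have := hpm_le a
    have := hpos b
    linarith [hsum ▸ h2]
  -- key inequality: (1 - P x) * t ≤ P x, or ε = 0 case (t = 1)
  have hkey : ∀ x, t * (1 - (1 - P x) * t) ≤ P x := by
    intro x
    rcases hrange with hr | hr
    · -- (1 - pmin) * t ≤ pmin
      have hs : (0:ℝ) < 1 / pmin - 1 := by
        have : (1:ℝ) < 1 / pmin := by rw [lt_div_iff₀ hpm0]; linarith
        linarith
      have hexp : 1 / pmin - 1 ≤ Real.exp ε := by
        have := Real.exp_le_exp.mpr hr
        rwa [Real.exp_log hs] at this
      have hkm : (1 - pmin) * t ≤ pmin := by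
        have h1 : (1 / pmin - 1) * t ≤ Real.exp ε * t :=
          mul_le_mul_of_nonneg_right hexp ht0.le
        rw [hEt] at h1
        have h2 : (1 / pmin - 1) * t * pmin ≤ 1 * pmin :=
          mul_le_mul_of_nonneg_right h1 hpm0.le
        have h3 : (1 / pmin - 1) * pmin = 1 - pmin := by
          field_simp
        nlinarith
      have hk : (1 - P x) * t ≤ P x := by
        have h4 : (1 - P x) * t ≤ (1 - pmin) * t :=
          mul_le_mul_of_nonneg_right (by linarith [hpm_le x]) ht0.le
        linarith [hpm_le x]
      nlinarith [mul_nonneg (sub_nonneg.mpr ht1) (sub_nonneg.mpr hk)]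
    · have : t = 1 := by rw [ht, hr, neg_zero, Real.exp_zero]
      rw [this]; ring_nf; linarith
  intro x y
  rw [hmarg y, hQ x y]
  by_cases h : y = x
  · subst h
    rw [if_pos rfl]
    constructor
    · exact hkey y
    · -- P y ≤ exp ε * (1 - (1 - P y) t)
      have h1 : P y ≤ 1 - (1 - P y) * t := by
        nlinarith [hle1 y, mul_nonneg (sub_nonneg.mpr (hle1 y)) (sub_nonneg.mpr ht1)]
      have h2 : 1 - (1 - P y) * t ≤ Real.exp ε * (1 - (1 - P y) * t) := by
        nlinarith [hpos y, h1]
      linarith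
  · rw [if_neg h]
    constructor
    · have ht2 : t * t ≤ 1 := by nlinarith
      nlinarith [hpos y, ht2]
    · have : Real.exp ε * (P y * t) = P y := by
        rw [show Real.exp ε * (P y * t) = Real.exp ε * t * P y by ring, hEt, one_mul]
      linarith [this.ge]
end

section
/- (Theorem 1, necessity) Let P_min = min_x P_X(x). If the context-aware randomized response mechanism with parameter ε ≥ 0 satisfies (ε,0)-LIP, then either ε = 0 or P_min ≥ 1/(e^ε + 1) (equivalently, ε ≥ log(1/P_min − 1)). -/
/-- Theorem 1, necessity: if the context-aware RR mechanism with parameter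
ε ≥ 0 satisfies (ε,0)-LIP, then ε = 0 or P_min ≥ 1/(e^ε + 1). -/
theorem contextAwareRR_pure_LIP_necessity
    {X : Type*} [Fintype X] [DecidableEq X] [Nontrivial X]
    (P : X → ℝ) (hpos : ∀ x, 0 < P x) (hsum : ∑ x, P x = 1)
    (ε : ℝ) (hε : 0 ≤ ε)
    (Q : X → X → ℝ)
    (hQ : ∀ x y, Q x y =
      if y = x then 1 - (1 - P x) * Real.exp (-ε) else P y * Real.exp (-ε))
    (pmin : ℝ) (hpmin : IsLeast (Set.range P) pmin)
    (hLIP : ∀ x y, Real.exp (-ε) * Q x y ≤ (∑ x', P x' * Q x' y) ∧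
      (∑ x', P x' * Q x' y) ≤ Real.exp ε * Q x y) :
    ε = 0 ∨ pmin ≥ 1 / (Real.exp ε + 1) := by
  rcases eq_or_lt_of_le hε with h0 | hεpos
  · exact Or.inl h0.symm
  right
  set t := Real.exp (-ε) with ht
  have ht1 : t < 1 := by
    rw [ht]
    calc Real.exp (-ε) < Real.exp 0 := Real.exp_lt_exp.mpr (by linarith)
    _ = 1 := Real.exp_zero
  have htpos : 0 < t := Real.exp_pos _
  obtain ⟨x0, hx0⟩ := hpmin.1
  -- the output marginal at x0 equals P x0
  have hmarg : (∑ x', P x' * Q x' x0) = P x0 := by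
    have key : ∀ x', P x' * Q x' x0
        = P x' * (P x0 * t) + (if x' = x0 then P x0 * (1 - t) else 0) := by
      intro x'
      rw [hQ x' x0]
      by_cases h : x' = x0
      · subst h
        rw [if_pos rfl, if_pos rfl]
        ring
      · rw [if_neg (fun hh => h hh.symm), if_neg h]
        ring
    rw [Finset.sum_congr rfl (fun x' _ => key x'), Finset.sum_add_distrib,
      ← Finset.sum_mul, hsum, Finset.sum_ite_eq' Finset.univ x0 (fun _ => P x0 * (1 - t))]
    simp
    ring
  have hineq := (hLIP x0 x0).1
  rw [hmarg, hQ x0 x0, if_pos rfl, hx0] at hineq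
  -- hineq : t * (1 - (1 - pmin) * t) ≤ pmin
  have hexp : Real.exp ε * t = 1 := by
    rw [ht, ← Real.exp_add]; simp
  have hepos : 0 < Real.exp ε := Real.exp_pos _
  rw [ge_iff_le, div_le_iff₀ (by linarith)]
  nlinarith [mul_pos htpos (sub_pos.mpr ht1), sq_nonneg (1 - t)]
end

section
/- For the context-aware randomized response mechanism with ε ≥ 0 and any x ≠ y in 𝒳, the privacy ratio is exactly e^ε: P_Y(y) / Q(y|x) = P_X(y) / (P_X(y)·e^{−ε}) = e^ε; in particular e^{−ε}·Q(y|x) ≤ P_Y(y) ≤ e^{ε}·Q(y|x). -/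
/-- for x ≠ y, the privacy ratio of the context-aware RR mechanism is
exactly e^ε, and in particular both (ε,0)-LIP inequalities hold in this case. -/
theorem contextAwareRR_ratio_offdiagonal
    {X : Type*} [Fintype X] [DecidableEq X] [Nontrivial X]
    (P : X → ℝ) (hpos : ∀ x, 0 < P x) (hsum : ∑ x, P x = 1)
    (ε : ℝ) (hε : 0 ≤ ε)
    (Q : X → X → ℝ)
    (hQ : ∀ x y, Q x y =
      if y = x then 1 - (1 - P x) * Real.exp (-ε) else P y * Real.exp (-ε)) :
    ∀ x y, x ≠ y →
      (∑ x', P x' * Q x' y) / Q x y = Real.exp ε ∧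
      P y / (P y * Real.exp (-ε)) = Real.exp ε ∧
      Real.exp (-ε) * Q x y ≤ (∑ x', P x' * Q x' y) ∧
      (∑ x', P x' * Q x' y) ≤ Real.exp ε * Q x y := by
  intro x y hxy
  have hE : (0:ℝ) < Real.exp (-ε) := Real.exp_pos _
  have hE1 : Real.exp (-ε) ≤ 1 := Real.exp_le_one_iff.mpr (by linarith)
  have hEE : Real.exp (-ε) * Real.exp ε = 1 := by
    rw [← Real.exp_add]; simp
  have hPy : 0 < P y := hpos y
  have hQxy : Q x y = P y * Real.exp (-ε) := by
    rw [hQ]; simp [Ne.symm hxy]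
  have hmarg : ∑ x', P x' * Q x' y = P y := by
    rw [← Finset.add_sum_erase _ _ (Finset.mem_univ y)]
    have h1 : ∑ x' ∈ Finset.univ.erase y, P x' * Q x' y
        = (1 - P y) * (P y * Real.exp (-ε)) := by
      have hc : ∀ z ∈ Finset.univ.erase y, P z * Q z y = P z * (P y * Real.exp (-ε)) := by
        intro z hz
        rw [hQ]
        simp [Ne.symm (Finset.ne_of_mem_erase hz)]
      rw [Finset.sum_congr rfl hc, ← Finset.sum_mul,
        Finset.sum_erase_eq_sub (Finset.mem_univ y), hsum]
    rw [h1, hQ, if_pos rfl]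
    ring
  rw [hmarg, hQxy]
  refine ⟨?_, ?_, ?_, ?_⟩
  · field_simp
    nlinarith
  · field_simp
    nlinarith
  · nlinarith [mul_le_one₀ hE1 hE.le hE1]
  · nlinarith
end

section
/- For the context-aware randomized response mechanism with ε ≥ 0 and any y ∈ 𝒳, the lower LIP bound at x = y with δ = 0, namely P_Y(y) ≥ e^{−ε}·Q(y|y), holds if and only if P_X(y) ≥ 1/(e^ε + 1) or ε = 0. -/
/-- the lower LIP bound at x = y with δ = 0, namely
P_Y(y) ≥ e^{−ε}·Q(y|y), holds iff P_X(y) ≥ 1/(e^ε + 1) or ε = 0. -/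
theorem contextAwareRR_lower_bound_diagonal_iff
    {X : Type*} [Fintype X] [DecidableEq X] [Nontrivial X]
    (P : X → ℝ) (hpos : ∀ x, 0 < P x) (hsum : ∑ x, P x = 1)
    (ε : ℝ) (hε : 0 ≤ ε)
    (Q : X → X → ℝ)
    (hQ : ∀ x y, Q x y =
      if y = x then 1 - (1 - P x) * Real.exp (-ε) else P y * Real.exp (-ε)) :
    ∀ y, ((∑ x', P x' * Q x' y) ≥ Real.exp (-ε) * Q y y ↔
      P y ≥ 1 / (Real.exp ε + 1) ∨ ε = 0) := by
  intro y
  set t := Real.exp (-ε) with hT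
  have ht : 0 < t := Real.exp_pos _
  have hexp : Real.exp ε * t = 1 := by
    rw [hT, ← Real.exp_add]; simp
  have hsumy : ∑ x', P x' * Q x' y = P y := by
    rw [← Finset.add_sum_erase _ _ (Finset.mem_univ y)]
    have h1 : ∑ x' ∈ Finset.univ.erase y, P x' * Q x' y
        = (∑ x' ∈ Finset.univ.erase y, P x') * (P y * t) := by
      rw [Finset.sum_mul]
      apply Finset.sum_congr rfl
      intro x hx
      rw [hQ x y, if_neg (Finset.ne_of_mem_erase hx).symm]
    rw [h1, Finset.sum_erase_eq_sub (Finset.mem_univ y), hsum, hQ y y, if_pos rfl]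
    ring
  rw [hsumy, hQ y y, if_pos rfl]
  constructor
  · intro h
    rcases eq_or_lt_of_le hε with h0 | h0
    · right; exact h0.symm
    left
    have ht1 : t < 1 := by rw [hT]; exact Real.exp_lt_one_iff.mpr (by linarith)
    have key : P y * (1 + t) ≥ t := by nlinarith
    rw [ge_iff_le, div_le_iff₀ (by positivity)]
    nlinarith [Real.exp_pos ε, hpos y]
  · intro h
    rcases h with h | h
    · have hp : 1 ≤ P y * (Real.exp ε + 1) := by
        rw [ge_iff_le, div_le_iff₀ (by positivity)] at h; linarith
      have key : t ≤ P y * (1 + t) := by nlinarith [Real.exp_pos ε]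
      have ht1 : t ≤ 1 := by rw [hT]; exact Real.exp_le_one_iff.mpr (by linarith)
      nlinarith
    · subst h; simp [hT]
end

section
/- (Theorem 2) Let P_min = min_x P_X(x). For any ε ≥ 0 and any δ ≥ 0 with δ ≥ (e^ε − 1)·(1 − P_min·(e^ε + 1))/e^{2ε}, the context-aware randomized response mechanism satisfies (ε,δ)-LIP: for all x, y ∈ 𝒳, e^{−ε}·Q(y|x) − δ ≤ P_Y(y) ≤ e^{ε}·Q(y|x) + δ. -/
/-- Theorem 2: for ε ≥ 0 and δ ≥ 0 with
δ ≥ (e^ε − 1)(1 − P_min(e^ε + 1))/e^{2ε}, the context-aware RR mechanism satisfies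
(ε,δ)-LIP. -/
theorem contextAwareRR_approx_LIP
    {X : Type*} [Fintype X] [DecidableEq X] [Nontrivial X]
    (P : X → ℝ) (hpos : ∀ x, 0 < P x) (hsum : ∑ x, P x = 1)
    (ε : ℝ) (hε : 0 ≤ ε)
    (Q : X → X → ℝ)
    (hQ : ∀ x y, Q x y =
      if y = x then 1 - (1 - P x) * Real.exp (-ε) else P y * Real.exp (-ε))
    (pmin : ℝ) (hpmin : IsLeast (Set.range P) pmin)
    (δ : ℝ) (hδ0 : 0 ≤ δ)
    (hδ : δ ≥ (Real.exp ε - 1) * (1 - pmin * (Real.exp ε + 1)) / Real.exp (2 * ε)) :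
    ∀ x y, Real.exp (-ε) * Q x y - δ ≤ (∑ x', P x' * Q x' y) ∧
      (∑ x', P x' * Q x' y) ≤ Real.exp ε * Q x y + δ := by
  set E := Real.exp (-ε) with hEdef
  set e := Real.exp ε with hedef
  have hE : E * e = 1 := by rw [hEdef, hedef, ← Real.exp_add]; simp
  have h1e : 1 ≤ e := Real.one_le_exp hε
  have hEpos : 0 < E := Real.exp_pos _
  have hE1 : E ≤ 1 := Real.exp_le_one_iff.mpr (by linarith)
  have hE2 : E * E ≤ 1 := by nlinarith
  have h2ε : Real.exp (2 * ε) = e * e := by rw [two_mul, Real.exp_add]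
  have hδ' : E - E * E - pmin * (1 - E * E) ≤ δ := by
    rw [ge_iff_le, div_le_iff₀ (by rw [h2ε]; positivity), h2ε] at hδ
    have hid : (E - E * E - pmin * (1 - E * E)) * (e * e)
        = (e - 1) * (1 - pmin * (e + 1)) := by
      linear_combination (e - (E * e + 1) + pmin * (E * e + 1)) * hE
    have hle : (E - E * E - pmin * (1 - E * E)) * (e * e) ≤ δ * (e * e) := by
      rw [hid]; exact hδ
    exact le_of_mul_le_mul_right hle (by positivity)
  intro x y
  have key : (∑ x', P x' * Q x' y) = P y := by
    rw [← Finset.add_sum_erase _ _ (Finset.mem_univ y)]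
    rw [Finset.sum_congr rfl (fun x' hx' => by
      rw [hQ, if_neg (Ne.symm (Finset.ne_of_mem_erase hx'))]),
      ← Finset.sum_mul, Finset.sum_erase_eq_sub (Finset.mem_univ y), hsum, hQ, if_pos rfl]
    ring
  rw [key, hQ]
  have hpy : pmin ≤ P y := hpmin.2 ⟨y, rfl⟩
  have hprod : 0 ≤ (P y - pmin) * (1 - E * E) :=
    mul_nonneg (by linarith) (by linarith)
  have hPyE : P y * (E * e) = P y := by rw [hE]; ring
  by_cases h : y = x
  · rw [if_pos h]
    subst h
    constructor
    · nlinarith [hδ', hprod]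
    · nlinarith [hPyE, hδ0, h1e, hE]
  · rw [if_neg h]
    constructor
    · nlinarith [hδ0, hpos y, hE2, mul_nonneg (hpos y).le (by linarith : (0:ℝ) ≤ 1 - E * E)]
    · nlinarith [hPyE, hδ0]
end

section
/- (Characterization from the proof of Theorem 2) Let P_min = min_x P_X(x) and fix ε ≥ 0 and δ ≥ 0. The context-aware randomized response mechanism satisfies (ε,δ)-LIP if and only if δ ≥ (e^ε − 1)·(1 − P_min·(e^ε + 1))/e^{2ε}. -/
/-- characterization from the proof of Theorem 2: the context-aware RR
mechanism satisfies (ε,δ)-LIP iff δ ≥ (e^ε − 1)(1 − P_min(e^ε + 1))/e^{2ε}. -/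
theorem contextAwareRR_approx_LIP_iff
    {X : Type*} [Fintype X] [DecidableEq X] [Nontrivial X]
    (P : X → ℝ) (hpos : ∀ x, 0 < P x) (hsum : ∑ x, P x = 1)
    (ε : ℝ) (hε : 0 ≤ ε)
    (Q : X → X → ℝ)
    (hQ : ∀ x y, Q x y =
      if y = x then 1 - (1 - P x) * Real.exp (-ε) else P y * Real.exp (-ε))
    (pmin : ℝ) (hpmin : IsLeast (Set.range P) pmin)
    (δ : ℝ) (hδ0 : 0 ≤ δ) :
    (∀ x y, Real.exp (-ε) * Q x y - δ ≤ (∑ x', P x' * Q x' y) ∧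
      (∑ x', P x' * Q x' y) ≤ Real.exp ε * Q x y + δ) ↔
    δ ≥ (Real.exp ε - 1) * (1 - pmin * (Real.exp ε + 1)) / Real.exp (2 * ε) := by
  set s := Real.exp (-ε) with hs_def
  set E := Real.exp ε with hE_def
  have hspos : 0 < s := Real.exp_pos _
  have hEpos : 0 < E := Real.exp_pos _
  have hs1 : s ≤ 1 := Real.exp_le_one_iff.mpr (neg_nonpos.mpr hε)
  have hE1 : 1 ≤ E := Real.one_le_exp hε
  have hsE : s * E = 1 := by
    rw [hs_def, hE_def, ← Real.exp_add]; simp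
  have hE2 : Real.exp (2 * ε) = E * E := by
    rw [two_mul, Real.exp_add]
  -- the output marginal equals P
  have hmarg : ∀ y, (∑ x', P x' * Q x' y) = P y := by
    intro y
    have herase : ∑ x' ∈ Finset.univ.erase y, P x' = 1 - P y := by
      have := Finset.add_sum_erase Finset.univ P (Finset.mem_univ y)
      linarith [hsum]
    have hsplit : (∑ x', P x' * Q x' y)
        = P y * Q y y + ∑ x' ∈ Finset.univ.erase y, P x' * Q x' y := by
      rw [Finset.add_sum_erase Finset.univ (fun x' => P x' * Q x' y) (Finset.mem_univ y)]
    rw [hsplit]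
    have h2 : ∑ x' ∈ Finset.univ.erase y, P x' * Q x' y
        = (∑ x' ∈ Finset.univ.erase y, P x') * (P y * s) := by
      rw [Finset.sum_mul]
      apply Finset.sum_congr rfl
      intro x' hx'
      rw [hQ x' y, if_neg (fun h => Finset.ne_of_mem_erase hx' h.symm)]
    rw [h2, herase, hQ y y, if_pos rfl]
    ring
  -- reduce RHS to a form in s
  have hrhs : (E - 1) * (1 - pmin * (E + 1)) / Real.exp (2 * ε)
      = (1 - s) * (s - pmin * (1 + s)) := by
    have hsv : s = E⁻¹ := by rw [hs_def, hE_def, Real.exp_neg]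
    rw [hE2, hsv]
    field_simp
  rw [hrhs]
  have hple : ∀ x : X, pmin ≤ P x := fun x => hpmin.2 (Set.mem_range_self x)
  constructor
  · intro h
    obtain ⟨x₀, hx₀⟩ := hpmin.1
    have := (h x₀ x₀).1
    rw [hmarg, hQ x₀ x₀, if_pos rfl, hx₀] at this
    nlinarith
  · intro hδ x y
    rw [hmarg, hQ x y]
    by_cases hxy : y = x
    · rw [if_pos hxy]
      subst hxy
      constructor
      · have h1 : pmin ≤ P y := hple y
        nlinarith [mul_nonneg (sub_nonneg.mpr hs1) hspos.le]
      · have h : E * (1 - (1 - P y) * s) = E - E * s + P y * (s * E) := by ring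
        rw [h, hsE]
        nlinarith [mul_nonneg hEpos.le (sub_nonneg.mpr hs1)]
    · rw [if_neg hxy]
      have hy := (hpos y).le
      constructor
      · have h1 : s * s ≤ 1 := by nlinarith
        nlinarith [mul_nonneg hy (sub_nonneg.mpr h1)]
      · nlinarith
end

section
/- For the context-aware randomized response mechanism with ε ≥ 0, for any x ≠ y in 𝒳 and any δ ≥ 0, both (ε,δ)-LIP inequalities hold: e^{−ε}·Q(y|x) − δ ≤ P_Y(y) and P_Y(y) ≤ e^{ε}·Q(y|x) + δ; moreover, for x = y the upper inequality P_Y(y) ≤ e^{ε}·Q(y|y) + δ holds for any δ ≥ 0. -/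
/-- for x ≠ y both (ε,δ)-LIP inequalities hold for any δ ≥ 0, and for
x = y the upper inequality holds for any δ ≥ 0. -/
theorem contextAwareRR_trivial_cases
    {X : Type*} [Fintype X] [DecidableEq X] [Nontrivial X]
    (P : X → ℝ) (hpos : ∀ x, 0 < P x) (hsum : ∑ x, P x = 1)
    (ε : ℝ) (hε : 0 ≤ ε)
    (Q : X → X → ℝ)
    (hQ : ∀ x y, Q x y =
      if y = x then 1 - (1 - P x) * Real.exp (-ε) else P y * Real.exp (-ε))
    (δ : ℝ) (hδ0 : 0 ≤ δ) :
    (∀ x y, x ≠ y →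
      Real.exp (-ε) * Q x y - δ ≤ (∑ x', P x' * Q x' y) ∧
      (∑ x', P x' * Q x' y) ≤ Real.exp ε * Q x y + δ) ∧
    (∀ y, (∑ x', P x' * Q x' y) ≤ Real.exp ε * Q y y + δ) := by
  have hE1 : Real.exp (-ε) ≤ 1 := Real.exp_le_one_iff.mpr (by linarith)
  have hE0 : 0 < Real.exp (-ε) := Real.exp_pos _
  have hEmul : Real.exp ε * Real.exp (-ε) = 1 := by
    rw [← Real.exp_add]; simp
  have hmarg : ∀ y, (∑ x', P x' * Q x' y) = P y := by
    intro y
    have h : ∀ x' ∈ Finset.univ.erase y, P x' * Q x' y = P x' * (P y * Real.exp (-ε)) := by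
      intro x' hx'
      rw [hQ, if_neg (Ne.symm (Finset.ne_of_mem_erase hx'))]
    rw [← Finset.add_sum_erase _ _ (Finset.mem_univ y), Finset.sum_congr rfl h,
        ← Finset.sum_mul, Finset.sum_erase_eq_sub (Finset.mem_univ y), hsum, hQ]
    simp; ring
  constructor
  · intro x y hxy
    rw [hmarg, hQ]
    have hne : ¬ (y = x) := fun h => hxy h.symm
    rw [if_neg hne]
    have hpy := hpos y
    constructor
    · have hE2 : Real.exp (-ε) * Real.exp (-ε) ≤ 1 := mul_le_one₀ hE1 hE0.le hE1
      nlinarith [mul_nonneg hpy.le (sub_nonneg.mpr hE2)]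
    · nlinarith
  · intro y
    rw [hmarg, hQ, if_pos rfl]
    have hpy := hpos y
    have hpy1 : P y ≤ 1 := by
      have : P y ≤ ∑ x, P x := Finset.single_le_sum (fun i _ => (hpos i).le) (Finset.mem_univ y)
      linarith [this, hsum.le]
    have h1 : 1 ≤ Real.exp ε := Real.one_le_exp hε
    nlinarith
end

section
/- (Remark 2, Case 2) Let 0 < p ≤ 1/2. If δ ≥ 1/(4·(1 − p)) − p and δ ≥ 0, then for every ε ≥ 0 one has (δ + p)·e^{2ε} − e^ε + 1 − p ≥ 0; consequently the context-aware randomized response mechanism with prior P_X having P_min = p satisfies (ε,δ)-LIP for every ε ≥ 0. -/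
/-- Remark 2, Case 2: if 0 < p ≤ 1/2 and δ ≥ 1/(4(1 − p)) − p with δ ≥ 0,
then (δ + p)e^{2ε} − e^ε + 1 − p ≥ 0 for every ε ≥ 0; consequently the context-aware RR
mechanism with P_min = p satisfies (ε,δ)-LIP for every ε ≥ 0. -/
theorem quadratic_nonneg_and_LIP_of_large_delta
    {X : Type*} [Fintype X] [DecidableEq X] [Nontrivial X]
    (P : X → ℝ) (hpos : ∀ x, 0 < P x) (hsum : ∑ x, P x = 1)
    (p : ℝ) (hp : 0 < p) (hp2 : p ≤ 1 / 2)
    (hpmin : IsLeast (Set.range P) p)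
    (δ : ℝ) (hδ0 : 0 ≤ δ) (hδ : δ ≥ 1 / (4 * (1 - p)) - p)
    (Q : ℝ → X → X → ℝ)
    (hQ : ∀ ε x y, Q ε x y =
      if y = x then 1 - (1 - P x) * Real.exp (-ε) else P y * Real.exp (-ε)) :
    (∀ ε : ℝ, 0 ≤ ε →
      (δ + p) * Real.exp (2 * ε) - Real.exp ε + 1 - p ≥ 0) ∧
    (∀ ε : ℝ, 0 ≤ ε → ∀ x y,
      Real.exp (-ε) * Q ε x y - δ ≤ (∑ x', P x' * Q ε x' y) ∧
      (∑ x', P x' * Q ε x' y) ≤ Real.exp ε * Q ε x y + δ) := by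
  have h1p : 0 < 1 - p := by linarith
  have hkey : (δ + p) * (4 * (1 - p)) ≥ 1 := by
    have := (div_le_iff₀ (by positivity : (0:ℝ) < 4 * (1 - p))).mp
      (by linarith : 1 / (4 * (1 - p)) ≤ δ + p)
    linarith
  have hquad : ∀ ε : ℝ, 0 ≤ ε →
      (δ + p) * Real.exp (2 * ε) - Real.exp ε + 1 - p ≥ 0 := by
    intro ε hε
    have ht : 1 ≤ Real.exp ε := Real.one_le_exp hε
    have h2 : Real.exp (2 * ε) = Real.exp ε * Real.exp ε := by
      rw [two_mul, Real.exp_add]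
    rw [h2]
    nlinarith [sq_nonneg (2 * (δ + p) * Real.exp ε - 1), sq_nonneg (Real.exp ε - 1)]
  refine ⟨hquad, ?_⟩
  intro ε hε x y
  have ht : 1 ≤ Real.exp ε := Real.one_le_exp hε
  have hs0 : 0 < Real.exp (-ε) := Real.exp_pos _
  have hts : Real.exp ε * Real.exp (-ε) = 1 := by
    rw [← Real.exp_add]; simp
  have hs1 : Real.exp (-ε) ≤ 1 := by nlinarith
  have hPy : ∑ x', P x' * Q ε x' y = P y := by
    rw [← Finset.add_sum_erase _ _ (Finset.mem_univ y)]
    have herase : ∑ x' ∈ Finset.univ.erase y, P x' * Q ε x' y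
        = (1 - P y) * (P y * Real.exp (-ε)) := by
      rw [show (1 - P y) * (P y * Real.exp (-ε))
          = (∑ x' ∈ Finset.univ.erase y, P x') * (P y * Real.exp (-ε)) by
        rw [Finset.sum_erase_eq_sub (Finset.mem_univ y), hsum],
        Finset.sum_mul]
      refine Finset.sum_congr rfl fun x' hx' => ?_
      rw [hQ, if_neg (Finset.ne_of_mem_erase hx').symm]
    rw [herase, hQ, if_pos rfl]
    ring
  rw [hPy, hQ]
  have hPx : p ≤ P x := hpmin.2 ⟨x, rfl⟩
  have hPx1 : P x ≤ 1 := by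
    obtain ⟨z, hz⟩ := exists_ne x
    have hz' : z ∈ Finset.univ.erase x := Finset.mem_erase.mpr ⟨hz, Finset.mem_univ z⟩
    have h1 := Finset.single_le_sum (f := P) (fun i _ => (hpos i).le) hz'
    have h2 := Finset.add_sum_erase Finset.univ P (Finset.mem_univ x)
    rw [hsum] at h2
    linarith [hpos z]
  have hPy0 : 0 < P y := hpos y
  have hPy1 : p ≤ P y := hpmin.2 ⟨y, rfl⟩
  by_cases hxy : y = x
  · subst hxy
    rw [if_pos rfl]
    have hq := hquad ε hε
    have h2 : Real.exp (2 * ε) = Real.exp ε * Real.exp ε := by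
      rw [two_mul, Real.exp_add]
    rw [h2] at hq
    have hq2 : (δ + P y) * (Real.exp ε * Real.exp ε) - Real.exp ε + 1 - P y ≥ 0 := by
      nlinarith [mul_nonneg (sub_nonneg.2 hPy1)
        (by nlinarith : (0:ℝ) ≤ Real.exp ε * Real.exp ε - 1)]
    have hfin : Real.exp (-ε) * (1 - (1 - P y) * Real.exp (-ε)) - δ - P y
        = -(Real.exp (-ε) * Real.exp (-ε) *
            ((δ + P y) * (Real.exp ε * Real.exp ε) - Real.exp ε + 1 - P y)) := by
      linear_combination ((δ + P y) * (Real.exp ε * Real.exp (-ε) + 1) - Real.exp (-ε)) * hts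
    constructor
    · linarith [mul_nonneg (mul_nonneg hs0.le hs0.le) hq2, hfin]
    · nlinarith
  · rw [if_neg hxy]
    constructor
    · nlinarith [mul_nonneg (by nlinarith : (0:ℝ) ≤ 1 - Real.exp (-ε) * Real.exp (-ε)) hPy0.le]
    · nlinarith
end

section
/- (Theorem 3, grouping mechanism) Let g : 𝒳 → 𝒳' be a surjection onto a finite type 𝒳' and define the grouped distribution P'(x') = ∑_{x : g(x) = x'} P_X(x), which is a probability mass function on 𝒳' with P'(x') > 0 for all x'. For ε ≥ 0, define the kernel K : 𝒳 → 𝒳' → ℝ by K(y|x) = P'(y)·e^{−ε} if y ≠ g(x) and K(g(x)|x) = 1 − (1 − P'(g(x)))·e^{−ε}, and let P_Y(y) = ∑_{x ∈ 𝒳} P_X(x)·K(y|x). Let P'_min = min_{x' ∈ 𝒳'} P'(x'). Then for any δ ≥ 0 with δ ≥ (e^ε − 1)·(1 − P'_min·(e^ε + 1))/e^{2ε}, the kernel K satisfies (ε,δ)-LIP with respect to P_X: for all x ∈ 𝒳 and y ∈ 𝒳', e^{−ε}·K(y|x) − δ ≤ P_Y(y) ≤ e^{ε}·K(y|x) + δ.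 -/
/-- Theorem 3, grouping mechanism: the grouped context-aware RR kernel
achieves (ε,δ)-LIP with respect to P_X whenever
δ ≥ (e^ε − 1)(1 − P'_min(e^ε + 1))/e^{2ε}. -/
theorem grouping_contextAwareRR_approx_LIP
    {X : Type*} [Fintype X] [DecidableEq X] [Nontrivial X]
    {X' : Type*} [Fintype X'] [DecidableEq X'] [Nontrivial X']
    (P : X → ℝ) (hpos : ∀ x, 0 < P x) (hsum : ∑ x, P x = 1)
    (g : X → X') (hg : Function.Surjective g)
    (P' : X' → ℝ)
    (hP' : ∀ x', P' x' = ∑ x ∈ Finset.univ.filter (fun x => g x = x'), P x)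
    (ε : ℝ) (hε : 0 ≤ ε)
    (K : X → X' → ℝ)
    (hK : ∀ x y, K x y =
      if y = g x then 1 - (1 - P' (g x)) * Real.exp (-ε) else P' y * Real.exp (-ε))
    (pmin' : ℝ) (hpmin' : IsLeast (Set.range P') pmin')
    (δ : ℝ) (hδ0 : 0 ≤ δ)
    (hδ : δ ≥ (Real.exp ε - 1) * (1 - pmin' * (Real.exp ε + 1)) / Real.exp (2 * ε)) :
    ∀ (x : X) (y : X'),
      Real.exp (-ε) * K x y - δ ≤ (∑ x', P x' * K x' y) ∧
      (∑ x', P x' * K x' y) ≤ Real.exp ε * K x y + δ := by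
  set a := Real.exp (-ε) with ha_def
  set E := Real.exp ε with hE_def
  have ha0 : 0 < a := Real.exp_pos _
  have hE0 : 0 < E := Real.exp_pos _
  have hE1 : 1 ≤ E := Real.one_le_exp hε
  have hae : a * E = 1 := by
    rw [ha_def, hE_def, ← Real.exp_add]; simp
  have ha1 : a ≤ 1 := by nlinarith
  -- the output distribution equals P'
  have hPY : ∀ y, (∑ x', P x' * K x' y) = P' y := by
    intro y
    have hterm : ∀ x, P x * K x y =
        P x * (P' y * a) + (if g x = y then P x * (1 - a) else 0) := by
      intro x
      rw [hK]
      by_cases h : y = g x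
      · subst h; rw [if_pos rfl, if_pos rfl]; ring
      · rw [if_neg h, if_neg (fun h' => h h'.symm)]; ring
    calc (∑ x', P x' * K x' y)
        = ∑ x', (P x' * (P' y * a) + (if g x' = y then P x' * (1 - a) else 0)) := by
          exact Finset.sum_congr rfl (fun x _ => hterm x)
      _ = (∑ x', P x') * (P' y * a) +
            ∑ x' ∈ Finset.univ.filter (fun x => g x = y), P x' * (1 - a) := by
          rw [Finset.sum_add_distrib, ← Finset.sum_mul, Finset.sum_filter]
      _ = P' y * a + P' y * (1 - a) := by
          rw [hsum, one_mul, ← Finset.sum_mul, ← hP']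
      _ = P' y := by ring
    -- basic facts about pmin' and P'
  have hpmin_nonneg : 0 ≤ pmin' := by
    obtain ⟨x0, hx0⟩ := hpmin'.1
    rw [← hx0, hP']
    exact Finset.sum_nonneg fun x _ => (hpos x).le
  intro x y
  rw [hPY y]
  have hp : pmin' ≤ P' y := hpmin'.2 ⟨y, rfl⟩
  have hp0 : 0 ≤ P' y := le_trans hpmin_nonneg hp
  have h2 : Real.exp (2 * ε) = E * E := by
    rw [two_mul, Real.exp_add, hE_def]
  have hδ' : (E - 1) * (1 - pmin' * (E + 1)) ≤ δ * (E * E) := by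
    rw [h2] at hδ
    rw [ge_iff_le, div_le_iff₀ (by positivity)] at hδ
    linarith
  rw [hK]
  by_cases h : y = g x
  · subst h
    rw [if_pos rfl]
    constructor
    · -- a * (1 - (1 - P' (g x)) * a) - δ ≤ P' (g x)
      have key : a * (1 - (1 - P' (g x)) * a) - P' (g x)
          ≤ (a - a * a) - pmin' * (1 - a * a) := by
        nlinarith [mul_nonneg (sub_nonneg.2 hp) (sub_nonneg.2 (by nlinarith : a * a ≤ 1))]
      have haE : a = 1 / E := eq_one_div_of_mul_eq_one_left hae
      have key2 : ((a - a * a) - pmin' * (1 - a * a)) * (E * E)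
          = (E - 1) * (1 - pmin' * (E + 1)) := by rw [haE]; field_simp; ring
      nlinarith [mul_pos hE0 hE0]
    · -- P' (g x) ≤ E * (1 - (1 - P' (g x)) * a) + δ
      nlinarith [hae]
  · rw [if_neg h]
    have haa : a * a ≤ 1 := by nlinarith
    constructor
    · nlinarith [mul_nonneg hp0 (sub_nonneg.2 haa)]
    · nlinarith [mul_nonneg hp0 (sub_nonneg.2 haa)]
end
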